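/- arXiv:2311.13738 — 2 statements merged into one kernel-verified Lean document; each statement's English description precedes it below -/
import Mathlib

section
/- Correctness of perturbed bit extraction: Let n ≥ 1 be an integer, L > 0, and let π₁, …, π_n ∈ ℝ. Given x ∈ [0,1), define x₀ = x and, for i = 1, …, n, b_i = trunc((x_{i−1} − 1/2^i)/L + π_i) and x_i = x_{i−1} − b_i/2^i. If x does not lie in the interval [k/2ⁿ − (max_i |π_i|)/L, k/2ⁿ + L + (max_i |π_i|)/L] for any integer k ∈ {0, 1, …, 2ⁿ − 1}, then each b_i ∈ {0, 1} and the b_i are exactly the leading n binary digits of x, i.e., Σ_{i=1}^{n} b_i · 2^{n−i} = ⌊2ⁿ · x⌋. -/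
/-- Truncation to the unit interval. -/
noncomputable def trunc (z : ℝ) : ℝ := min 1 (max 0 z)

/-- The sequence `x₀ = x`, `x_i = x_{i−1} − b_i / 2^i`, where
`b_i = trunc((x_{i−1} − 1/2^i)/L + π_i)`. -/
noncomputable def xSeq (L : ℝ) (π : ℕ → ℝ) (x : ℝ) : ℕ → ℝ
  | 0 => x
  | i + 1 =>
      xSeq L π x i - trunc ((xSeq L π x i - 1 / 2 ^ (i + 1)) / L + π (i + 1)) / 2 ^ (i + 1)

/-- The bits extracted by the perturbed bit-extraction circuit:
`b_i = trunc((x_{i−1} − 1/2^i)/L + π_i)`. -/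
noncomputable def bSeq (L : ℝ) (π : ℕ → ℝ) (x : ℝ) (i : ℕ) : ℝ :=
  trunc ((xSeq L π x (i - 1) - 1 / 2 ^ i) / L + π i)

/-! Write `m_i = ⌊2^i x⌋`. By induction `x_i = x - m_i / 2^i`, so the `(i+1)`-st comparator sees
`(x - c)/L + π_{i+1}` with `c = (2 m_i + 1) / 2^(i+1)`, a multiple of `2^-n`. Since `x` avoids the
window `[c - M/L, c + L + M/L]` (and `L ≤ 1`, by the window at `c = 0`), this argument is `≤ 0`
when `x < c` and `≥ 1` when `x > c`, so `b_{i+1} = m_{i+1} - 2 m_i` is the next binary digit of `x`.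
Horner's rule then sums the digits to `m_n`. -/

theorem trunc_eq_zero_of_nonpos {z : ℝ} (hz : z ≤ 0) : trunc z = 0 := by
  simp [trunc, max_eq_left hz]

theorem trunc_eq_one_of_one_le {z : ℝ} (hz : 1 ≤ z) : trunc z = 1 := by
  simp [trunc, max_eq_right (zero_le_one.trans hz), hz]

theorem trunc_div_add_eq_ite {L M p t : ℝ} (hL : 0 < L) (hL1 : L ≤ 1) (hp : |p| ≤ M)
    (ht : t ∉ Set.Icc (-(M / L)) (L + M / L)) : trunc (t / L + p) = if 0 ≤ t then 1 else 0 := by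
  obtain ⟨hpl, hpu⟩ := abs_le.1 hp
  have hM : M ≤ M / L := le_div_self ((abs_nonneg p).trans hp) hL hL1
  rw [Set.mem_Icc, not_and_or, not_le, not_le] at ht
  rcases ht with ht | ht
  · have ht0 : t < 0 := ht.trans_le (by linarith)
    have : -t ≤ -t / L := le_div_self (by linarith) hL hL1
    rw [if_neg ht0.not_ge]
    exact trunc_eq_zero_of_nonpos (by rw [neg_div] at this; linarith)
  · have ht0 : 0 ≤ t - L := by linarith
    have : t - L ≤ (t - L) / L := le_div_self ht0 hL hL1
    rw [if_pos (by linarith)]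
    exact trunc_eq_one_of_one_le (by rw [sub_div, div_self hL.ne'] at this; linarith)

theorem Nat.floor_two_mul_eq {y : ℝ} (hy : 0 ≤ y) :
    ⌊2 * y⌋₊ = 2 * ⌊y⌋₊ + if (⌊y⌋₊ : ℝ) + 1 / 2 ≤ y then 1 else 0 := by
  have h1 := Nat.floor_le hy
  have h2 := Nat.lt_floor_add_one y
  rw [Nat.floor_eq_iff (by positivity)]
  split_ifs with h <;> push_cast <;> constructor <;> linarith

theorem exists_lt_two_pow_div_eq {i n j : ℕ} (hj : j < 2 ^ i) (hin : i ≤ n) :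
    ∃ k : ℕ, k < 2 ^ n ∧ (k : ℝ) / 2 ^ n = j / 2 ^ i := by
  obtain ⟨d, rfl⟩ := Nat.exists_eq_add_of_le hin
  refine ⟨j * 2 ^ d, by rw [pow_add]; exact Nat.mul_lt_mul_of_pos_right hj (by positivity), ?_⟩
  push_cast; rw [pow_add]; field_simp

theorem Finset.sum_Icc_mul_pow_eq_sub {R : Type*} [CommRing R] {b : R} {f d : ℕ → R} {n : ℕ}
    (h : ∀ i < n, f (i + 1) = b * f i + d (i + 1)) :
    ∑ i ∈ Finset.Icc 1 n, d i * b ^ (n - i) = f n - b ^ n * f 0 := by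
  induction n with
  | zero => simp
  | succ n ih =>
    have hpow : ∀ i ∈ Finset.Icc 1 n, d i * b ^ (n + 1 - i) = b * (d i * b ^ (n - i)) := by
      intro i hi
      rw [Nat.sub_add_comm (Finset.mem_Icc.1 hi).2, pow_succ]
      ring
    rw [Finset.sum_Icc_succ_top (Nat.le_add_left 1 n), Finset.sum_congr rfl hpow, ← Finset.mul_sum,
      ih fun i hi => h i (by omega), h n n.lt_succ_self, Nat.sub_self, pow_zero, pow_succ]
    ring

theorem lt_one_of_notMem_Icc {L M x : ℝ} (hL : 0 < L) (hM : 0 ≤ M) (hx : x ∈ Set.Ico 0 1)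
    (h : x ∉ Set.Icc (-(M / L)) (L + M / L)) : L < 1 := by
  have : 0 ≤ M / L := div_nonneg hM hL.le
  by_contra! hL1
  exact h ⟨by linarith [hx.1], by linarith [hx.2]⟩

theorem bSeq_succ_eq_ite {n i : ℕ} {L M x : ℝ} {π : ℕ → ℝ} (hL : 0 < L) (hx : x ∈ Set.Ico 0 1)
    (hin : i < n) (hπ : |π (i + 1)| ≤ M)
    (hbad : ∀ k : ℕ, k < 2 ^ n →
      x ∉ Set.Icc ((k : ℝ) / 2 ^ n - M / L) ((k : ℝ) / 2 ^ n + L + M / L))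
    (hxi : xSeq L π x i = x - ⌊2 ^ i * x⌋₊ / 2 ^ i) :
    bSeq L π x (i + 1) = if (⌊2 ^ i * x⌋₊ : ℝ) + 1 / 2 ≤ 2 ^ i * x then 1 else 0 := by
  have hL1 : L ≤ 1 := by
    refine (lt_one_of_notMem_Icc hL ((abs_nonneg _).trans hπ) hx ?_).le
    simpa [sub_eq_add_neg] using hbad 0 (by positivity)
  set m := ⌊2 ^ i * x⌋₊
  have hm : m < 2 ^ i := by
    have : 2 ^ i * x < 2 ^ i := mul_lt_of_lt_one_right (by positivity) hx.2
    exact (Nat.floor_lt (by have := hx.1; positivity)).2 (by exact_mod_cast this)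
  -- the threshold of the `(i+1)`-st comparator is the dyadic point `(2m+1)/2^(i+1)`
  obtain ⟨k, hk, hkc⟩ := exists_lt_two_pow_div_eq (j := 2 * m + 1) (by rw [pow_succ]; omega) hin
  have ht : x - (2 * m + 1) / 2 ^ (i + 1) ∉ Set.Icc (-(M / L)) (L + M / L) := by
    push_cast at hkc
    rw [← hkc]
    intro ⟨h1, h2⟩
    exact hbad k hk ⟨by linarith, by linarith⟩
  have hb : bSeq L π x (i + 1) = trunc ((x - (2 * m + 1) / 2 ^ (i + 1)) / L + π (i + 1)) := by
    rw [bSeq, Nat.add_sub_cancel, hxi]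
    congr 3
    field_simp
    ring
  rw [hb, trunc_div_add_eq_ite hL hL1 hπ ht]
  refine if_congr ?_ rfl rfl
  rw [sub_nonneg, div_le_iff₀ (by positivity), pow_succ]
  constructor <;> intro <;> linarith

theorem xSeq_eq_sub_floor {n : ℕ} {L M x : ℝ} {π : ℕ → ℝ} (hL : 0 < L) (hx : x ∈ Set.Ico 0 1)
    (hM : ∀ i, 1 ≤ i → i ≤ n → |π i| ≤ M)
    (hbad : ∀ k : ℕ, k < 2 ^ n →
      x ∉ Set.Icc ((k : ℝ) / 2 ^ n - M / L) ((k : ℝ) / 2 ^ n + L + M / L)) :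
    ∀ i ≤ n, xSeq L π x i = x - ⌊2 ^ i * x⌋₊ / 2 ^ i
  | 0, _ => by simp [xSeq, Nat.floor_eq_zero.2 hx.2]
  | i + 1, hi => by
    have hxi := xSeq_eq_sub_floor hL hx hM hbad i (by omega)
    have hb := bSeq_succ_eq_ite hL hx hi (hM (i + 1) (by omega) hi) hbad hxi
    have hstep : xSeq L π x (i + 1) = xSeq L π x i - bSeq L π x (i + 1) / 2 ^ (i + 1) := rfl
    rw [hstep, hb, hxi, pow_succ', mul_assoc, Nat.floor_two_mul_eq (by have := hx.1; positivity)]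
    push_cast
    split_ifs <;> field_simp <;> ring

theorem extractBits_correct_general (n : ℕ) (L : ℝ) (hL : 0 < L)
    (π : ℕ → ℝ) (x : ℝ) (hx : x ∈ Set.Ico (0 : ℝ) 1)
    (M : ℝ) (hM : ∀ i, 1 ≤ i → i ≤ n → |π i| ≤ M)
    (hbad : ∀ k : ℕ, k < 2 ^ n →
      x ∉ Set.Icc ((k : ℝ) / 2 ^ n - M / L) ((k : ℝ) / 2 ^ n + L + M / L)) :
    (∀ i, 1 ≤ i → i ≤ n → bSeq L π x i = 0 ∨ bSeq L π x i = 1) ∧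
    (∑ i ∈ Finset.Icc 1 n, bSeq L π x i * 2 ^ (n - i)) = (⌊(2 : ℝ) ^ n * x⌋ : ℝ) := by
  have hx0 : 0 ≤ x := hx.1
  have hbit : ∀ i < n,
      bSeq L π x (i + 1) = if (⌊2 ^ i * x⌋₊ : ℝ) + 1 / 2 ≤ 2 ^ i * x then 1 else 0 :=
    fun i hi ↦ bSeq_succ_eq_ite hL hx hi (hM (i + 1) (by omega) hi) hbad
      (xSeq_eq_sub_floor hL hx hM hbad i hi.le)
  refine ⟨fun i hi1 hin ↦ ?_, ?_⟩
  · obtain ⟨i, rfl⟩ := Nat.exists_eq_add_of_le' hi1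
    rw [hbit i (by omega)]
    split_ifs <;> simp
  · have hfloor : ∀ i < n, (⌊2 ^ (i + 1) * x⌋₊ : ℝ) = 2 * ⌊2 ^ i * x⌋₊ + bSeq L π x (i + 1) := by
      intro i hi
      rw [hbit i hi, pow_succ', mul_assoc, Nat.floor_two_mul_eq (by positivity)]
      push_cast
      split_ifs <;> ring
    rw [Finset.sum_Icc_mul_pow_eq_sub (f := fun i ↦ (⌊2 ^ i * x⌋₊ : ℝ)) hfloor,
      ← natCast_floor_eq_intCast_floor (by positivity)]
    simp [Nat.floor_eq_zero.2 hx.2]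

/-- Correctness of perturbed bit extraction: if `x` avoids all the bad regions, then the
extracted bits are exactly the leading `n` binary digits of `x`. -/
theorem extractBits_correct (n : ℕ) (hn : 1 ≤ n) (L : ℝ) (hL : 0 < L)
    (π : ℕ → ℝ) (x : ℝ) (hx : x ∈ Set.Ico (0 : ℝ) 1)
    (M : ℝ) (hM : ∀ i, 1 ≤ i → i ≤ n → |π i| ≤ M)
    (hbad : ∀ k : ℕ, k < 2 ^ n →
      x ∉ Set.Icc ((k : ℝ) / 2 ^ n - M / L) ((k : ℝ) / 2 ^ n + L + M / L)) :
    (∀ i, 1 ≤ i → i ≤ n → bSeq L π x i = 0 ∨ bSeq L π x i = 1) ∧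
    (∑ i ∈ Finset.Icc 1 n, bSeq L π x i * 2 ^ (n - i)) = (⌊(2 : ℝ) ^ n * x⌋ : ℝ) :=
  extractBits_correct_general n L hL π x hx M hM hbad
end

section
/- Exact simulation of Boolean circuits by perturbed linear circuits: Let a Boolean circuit be given by variables v₁, …, v_N, where v₁, …, v_k are inputs and each variable v_i with i > k is the output of exactly one gate, either a NOT gate v_i = 1 − v_j with j < i, or an AND gate (v_i = 1 if v_j = v_{j'} = 1 and v_i = 0 otherwise) with j, j' < i. Its perturbed linear simulation computes real values w₁, …, w_N as follows: w_i is the i-th input for i ≤ k; for a NOT gate, w_i = 1 − w_j; for an AND gate, w_i = trunc(4·(w_j + w_{j'} − 1.5) + π_i), where π_i ∈ ℝ is the perturbation of that gate. If every input lies in {0, 1} and every perturbation π_i lies in the open interval (−1, 1), then for every i the simulated value w_i lies in {0, 1} and equals the value v_i computed by the Boolean circuit on the same input. -/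
/-- A gate of a Boolean circuit: either a NOT gate or an AND gate, with the indices of its
input variables. -/
inductive BGate where
  | not : ℕ → BGate
  | and : ℕ → ℕ → BGate

/-- The Boolean value of variable `i` of the circuit: variables with index `≤ k` are inputs,
and every other variable is computed by its gate (gates must refer to earlier variables;
out-of-order references default to `false`). -/
def boolVal (k : ℕ) (gate : ℕ → BGate) (inp : ℕ → Bool) (i : ℕ) : Bool :=
  if i ≤ k then inp i
  else
    match gate i with
    | .not j => if h : j < i then !(boolVal k gate inp j) else false
    | .and j j' =>
        if h : j < i ∧ j' < i then (boolVal k gate inp j && boolVal k gate inp j') else false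
termination_by i
decreasing_by all_goals omega

/-- The value of variable `i` in the perturbed linear simulation of the Boolean circuit:
a NOT gate becomes `1 - w_j`, and an AND gate becomes `trunc(4(w_j + w_{j'} − 1.5) + π_i)`. -/
noncomputable def realVal (k : ℕ) (gate : ℕ → BGate) (inp π : ℕ → ℝ) (i : ℕ) : ℝ :=
  if i ≤ k then inp i
  else
    match gate i with
    | .not j => if h : j < i then 1 - realVal k gate inp π j else 0
    | .and j j' =>
        if h : j < i ∧ j' < i then
          trunc (4 * (realVal k gate inp π j + realVal k gate inp π j' - 1.5) + π i)
        else 0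
termination_by i
decreasing_by all_goals omega


lemma trunc_eq_zero {z : ℝ} (h : z ≤ 0) : trunc z = 0 := by
  simp [trunc, max_eq_left h]

lemma trunc_eq_one {z : ℝ} (h : 1 ≤ z) : trunc z = 1 := by
  simp [trunc, max_eq_right (zero_le_one.trans h), min_eq_left h]

lemma one_sub_ite_bool (b : Bool) : 1 - (if b then 1 else 0 : ℝ) = (if !b then 1 else 0 : ℝ) := by
  cases b <;> norm_num

/-- With a perturbation of size `< 1`, the affine form `4(x + y − 1.5) + p` is `≤ -1 + p < 0`
unless both inputs are `1`, when it is `2 + p > 1`. -/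
lemma trunc_and_gate (b b' : Bool) {p : ℝ} (hp : p ∈ Set.Ioo (-1 : ℝ) 1) :
    trunc (4 * ((if b then 1 else 0 : ℝ) + (if b' then 1 else 0 : ℝ) - 1.5) + p) =
      (if b && b' then 1 else 0 : ℝ) := by
  obtain ⟨hp₁, hp₂⟩ := hp
  cases b <;> cases b' <;> norm_num
  all_goals first
    | exact trunc_eq_zero (by linarith)
    | exact trunc_eq_one (by linarith)

section Unfolding

variable {k : ℕ} {gate : ℕ → BGate} {binp : ℕ → Bool} {inp π : ℕ → ℝ} {i : ℕ}

lemma boolVal_of_le (hi : i ≤ k) : boolVal k gate binp i = binp i := by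
  rw [boolVal, if_pos hi]

lemma realVal_of_le (hi : i ≤ k) : realVal k gate inp π i = inp i := by
  rw [realVal, if_pos hi]

lemma boolVal_of_not {j : ℕ} (hi : k < i) (hg : gate i = .not j) (hj : j < i) :
    boolVal k gate binp i = !boolVal k gate binp j := by
  rw [boolVal, if_neg hi.not_ge, hg]
  exact dif_pos hj

lemma realVal_of_not {j : ℕ} (hi : k < i) (hg : gate i = .not j) (hj : j < i) :
    realVal k gate inp π i = 1 - realVal k gate inp π j := by
  rw [realVal, if_neg hi.not_ge, hg]
  exact dif_pos hj

lemma boolVal_of_and {j j' : ℕ} (hi : k < i) (hg : gate i = .and j j') (hj : j < i ∧ j' < i) :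
    boolVal k gate binp i = (boolVal k gate binp j && boolVal k gate binp j') := by
  rw [boolVal, if_neg hi.not_ge, hg]
  exact dif_pos hj

lemma realVal_of_and {j j' : ℕ} (hi : k < i) (hg : gate i = .and j j') (hj : j < i ∧ j' < i) :
    realVal k gate inp π i =
      trunc (4 * (realVal k gate inp π j + realVal k gate inp π j' - 1.5) + π i) := by
  rw [realVal, if_neg hi.not_ge, hg]
  exact dif_pos hj

end Unfolding

lemma realVal_eq_boolVal (k N : ℕ) (gate : ℕ → BGate)
    (hwf : ∀ i, k < i → i ≤ N →
      match gate i with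
      | .not j => j < i
      | .and j j' => j < i ∧ j' < i)
    (binp : ℕ → Bool) (inp : ℕ → ℝ) (hinp : ∀ i, i ≤ k → inp i = (if binp i then 1 else 0 : ℝ))
    (π : ℕ → ℝ) (hπ : ∀ i, π i ∈ Set.Ioo (-1 : ℝ) 1) (i : ℕ) (hiN : i ≤ N) :
    realVal k gate inp π i = (if boolVal k gate binp i then 1 else 0 : ℝ) := by
  induction i using Nat.strong_induction_on with
  | _ i ih =>
    rcases le_or_gt i k with hik | hki
    · rw [realVal_of_le hik, boolVal_of_le hik, hinp i hik]
    have hg := hwf i hki hiN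
    cases hgate : gate i with
    | not j =>
      rw [hgate] at hg
      rw [realVal_of_not hki hgate hg, boolVal_of_not hki hgate hg, ih j hg (hg.le.trans hiN),
        one_sub_ite_bool]
    | and j j' =>
      rw [hgate] at hg
      rw [realVal_of_and hki hgate hg, boolVal_of_and hki hgate hg,
        ih j hg.1 (hg.1.le.trans hiN), ih j' hg.2 (hg.2.le.trans hiN), trunc_and_gate _ _ (hπ i)]

/-- Exact simulation of Boolean circuits by perturbed linear circuits. -/
theorem boolean_simulation_correct (k N : ℕ) (gate : ℕ → BGate)
    (hwf : ∀ i, k < i → i ≤ N →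
      match gate i with
      | .not j => j < i
      | .and j j' => j < i ∧ j' < i)
    (binp : ℕ → Bool) (inp : ℕ → ℝ)
    (hinp : ∀ i, i ≤ k → inp i = if binp i then 1 else 0)
    (π : ℕ → ℝ) (hπ : ∀ i, π i ∈ Set.Ioo (-1 : ℝ) 1) :
    ∀ i, i ≤ N →
      (realVal k gate inp π i = 0 ∨ realVal k gate inp π i = 1) ∧
      realVal k gate inp π i = (if boolVal k gate binp i then 1 else 0) := by
  intro i hi
  have h := realVal_eq_boolVal k N gate hwf binp inp hinp π hπ i hi
  refine ⟨?_, h⟩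
  rw [h]
  split_ifs <;> simp
end
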